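/- Let s, d be real numbers, let z ≥ 1, and let x_0, x_1, …, x_z be distinct vertices with u = x_0 and v = x_z. Fix values η_u, η_v ∈ {+1,−1}. Then the sum over all 2^{z−1} labellings τ : {x_0,…,x_z} → {+1,−1} with τ_{x_0} = η_u and τ_{x_z} = η_v of the product ∏_{i=1}^z (τ_{x_{i−1}} τ_{x_i} s + d) equals 2^{z−1} (η_u η_v s^z + d^z). -/

import Mathlib

open Filter Finset
open scoped Classical

noncomputable section

/-! ### The sample space of the stochastic block model -/

/-- Potential-edge index: ordered pairs `(u,v)` of vertices with `u < v`. -/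
def EdgeIdx (n : ℕ) : Type := {p : Fin n × Fin n // p.1 < p.2}

instance (n : ℕ) : Fintype (EdgeIdx n) := by unfold EdgeIdx; infer_instance
instance (n : ℕ) : DecidableEq (EdgeIdx n) := by unfold EdgeIdx; infer_instance

/-- A graph on vertex set `Fin n`, given by the indicator of each potential edge. -/
def SGraph (n : ℕ) : Type := EdgeIdx n → Bool

instance (n : ℕ) : Fintype (SGraph n) := by unfold SGraph; infer_instance
instance (n : ℕ) : DecidableEq (SGraph n) := by unfold SGraph; infer_instance

/-- Adjacency in a graph. -/
def adj {n : ℕ} (G : SGraph n) (u v : Fin n) : Bool :=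
  if h : u < v then G ⟨(u, v), h⟩ else if h' : v < u then G ⟨(v, u), h'⟩ else false

/-- The ±1 value of a Boolean label. -/
def sgn (b : Bool) : ℝ := if b then 1 else -1

/-- Sample space of the block model: a labelling together with a graph. -/
def SampleSpace (n : ℕ) : Type := (Fin n → Bool) × SGraph n

instance (n : ℕ) : Fintype (SampleSpace n) := by unfold SampleSpace; infer_instance

/-- The probability mass of an outcome `ω` under the stochastic block model
`𝔾(n, a/n, b/n)`: labels are uniform, and conditionally on the labels each
potential edge appears independently with probability `a/n` (equal labels)
or `b/n` (unequal labels). -/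
def bmass (a b : ℝ) (n : ℕ) (ω : SampleSpace n) : ℝ :=
  (1 / 2) ^ n *
    ∏ e : EdgeIdx n,
      (if ω.2 e then (if ω.1 e.1.1 = ω.1 e.1.2 then a / n else b / n)
       else 1 - (if ω.1 e.1.1 = ω.1 e.1.2 then a / n else b / n))

/-- Probability of an event under the block model. -/
def bPr (a b : ℝ) (n : ℕ) (A : Set (SampleSpace n)) : ℝ :=
  ∑ ω : SampleSpace n, if ω ∈ A then bmass a b n ω else 0

/-- Conditional expectation of `f` given the event `A`, under the block model. -/
def bCondE (a b : ℝ) (n : ℕ) (f : SampleSpace n → ℝ) (A : Set (SampleSpace n)) : ℝ :=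
  (∑ ω : SampleSpace n, if ω ∈ A then bmass a b n ω * f ω else 0) / bPr a b n A

/-- Conditional probability of `B` given `A`, under the block model. -/
def bCondPr (a b : ℝ) (n : ℕ) (B A : Set (SampleSpace n)) : ℝ :=
  bPr a b n (B ∩ A) / bPr a b n A

/-- The event that the labelling agrees with `τ` on the set `U`. -/
def labelEvent {n : ℕ} (U : Finset (Fin n)) (τ : Fin n → Bool) : Set (SampleSpace n) :=
  {ω | ∀ x ∈ U, ω.1 x = τ x}

/-- Mass of a graph under the block model conditioned on the full labelling `τ`. -/
def cmass {n : ℕ} (a b : ℝ) (τ : Fin n → Bool) (G : SGraph n) : ℝ :=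
  ∏ e : EdgeIdx n,
    (if G e then (if τ e.1.1 = τ e.1.2 then a / n else b / n)
     else 1 - (if τ e.1.1 = τ e.1.2 then a / n else b / n))

/-- Expectation over the graph in the block model conditioned on the labelling `τ`. -/
def cE {n : ℕ} (a b : ℝ) (τ : Fin n → Bool) (f : SGraph n → ℝ) : ℝ :=
  ∑ G : SGraph n, cmass a b τ G * f G

/-- Mass of a graph with independent edges, where the pair `{x,y}` is an edge with
probability `(d + τ_x τ_y s)/n`. -/
def lmass {n : ℕ} (s d : ℝ) (τ : Fin n → Bool) (G : SGraph n) : ℝ :=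
  ∏ e : EdgeIdx n,
    (if G e then (d + sgn (τ e.1.1) * sgn (τ e.1.2) * s) / n
     else 1 - (d + sgn (τ e.1.1) * sgn (τ e.1.2) * s) / n)

/-- Expectation for the random graph with edge probabilities `(d + τ_x τ_y s)/n`. -/
def lE {n : ℕ} (s d : ℝ) (τ : Fin n → Bool) (f : SGraph n → ℝ) : ℝ :=
  ∑ G : SGraph n, lmass s d τ G * f G

/-! ### Paths -/

/-- The `i`-th vertex of a path encoded as `γ : Fin (k+1) → β` (index clamped to `k`). -/
def pget {β : Type*} {k : ℕ} (γ : Fin (k + 1) → β) (i : ℕ) : β :=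
  γ ⟨min i k, by omega⟩

/-- A path of length `k`: consecutive vertices are distinct. -/
def IsPath {n : ℕ} (k : ℕ) (γ : Fin (k + 1) → Fin n) : Prop :=
  ∀ i < k, pget γ i ≠ pget γ (i + 1)

/-- A non-backtracking path of length `k`. -/
def IsNB {n : ℕ} (k : ℕ) (γ : Fin (k + 1) → Fin n) : Prop :=
  IsPath k γ ∧ ∀ i, i + 2 ≤ k → pget γ i ≠ pget γ (i + 2)

/-- A self-avoiding path of length `k`: all vertices distinct. -/
def IsSAW {n : ℕ} (k : ℕ) (γ : Fin (k + 1) → Fin n) : Prop :=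
  IsPath k γ ∧ ∀ i ≤ k, ∀ j ≤ k, pget γ i = pget γ j → i = j

/-- The edge weight `W_e = 1_{e ∈ E(G)} - d/n`. -/
def W {n : ℕ} (d : ℝ) (G : SGraph n) (u v : Fin n) : ℝ :=
  (if adj G u v then 1 else 0) - d / n

/-- The weight `X_γ = ∏ W_{{γ(i-1), γ(i)}}` of a path `γ` of length `k`. -/
def Xweight {n : ℕ} (d : ℝ) (G : SGraph n) (k : ℕ) (γ : Fin (k + 1) → Fin n) : ℝ :=
  ∏ i ∈ Finset.range k, W d G (pget γ i) (pget γ (i + 1))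

/-- `Y_{u,v}`: the total weight of self-avoiding paths of length `k` from `u` to `v`. -/
def Ysaw {n : ℕ} (d : ℝ) (G : SGraph n) (k : ℕ) (u v : Fin n) : ℝ :=
  ∑ γ : Fin (k + 1) → Fin n,
    if IsSAW k γ ∧ pget γ 0 = u ∧ pget γ k = v then Xweight d G k γ else 0

/-- `N^{(k)}_{u,v}`: the total weight of non-backtracking paths of length `k` from `u` to `v`. -/
def Nnb {n : ℕ} (d : ℝ) (G : SGraph n) (k : ℕ) (u v : Fin n) : ℝ :=
  ∑ γ : Fin (k + 1) → Fin n,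
    if IsNB k γ ∧ pget γ 0 = u ∧ pget γ k = v then Xweight d G k γ else 0

/-! ### New, old, returning edges -/

/-- Edge `i` of `γ` (from `γ i` to `γ (i+1)`) is *new* if its head has not been
visited before. -/
def isNewEdge {n k : ℕ} (γ : Fin (k + 1) → Fin n) (i : ℕ) : Prop :=
  ∀ j ≤ i, pget γ j ≠ pget γ (i + 1)

/-- Edge `i` of `γ` is *old* if it coincides (as an unordered pair) with an earlier edge. -/
def isOldEdge {n k : ℕ} (γ : Fin (k + 1) → Fin n) (i : ℕ) : Prop :=
  ∃ j < i, s(pget γ j, pget γ (j + 1)) = s(pget γ i, pget γ (i + 1))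

/-- The number of new edges of a path. -/
def kNew {n k : ℕ} (γ : Fin (k + 1) → Fin n) : ℕ :=
  ((Finset.range k).filter fun i => isNewEdge γ i).card

/-- The number of returning edges of a path (neither new nor old). -/
def kRet {n k : ℕ} (γ : Fin (k + 1) → Fin n) : ℕ :=
  ((Finset.range k).filter fun i => ¬ isNewEdge γ i ∧ ¬ isOldEdge γ i).card

/-- Edge `i` of `γ₂` is *new with respect to `γ₁`* if its head is not a vertex of `γ₁`. -/
def isNewWrt {n k : ℕ} (γ₁ γ₂ : Fin (k + 1) → Fin n) (i : ℕ) : Prop :=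
  ∀ j ≤ k, pget γ₁ j ≠ pget γ₂ (i + 1)

/-- Edge `i` of `γ₂` is *old with respect to `γ₁`* if it appears (as an unordered
pair) among the edges of `γ₁`. -/
def isOldWrt {n k : ℕ} (γ₁ γ₂ : Fin (k + 1) → Fin n) (i : ℕ) : Prop :=
  ∃ j < k, s(pget γ₁ j, pget γ₁ (j + 1)) = s(pget γ₂ i, pget γ₂ (i + 1))

/-- The number of edges of `γ₂` that are new with respect to `γ₁`. -/
def kNewWrt {n k : ℕ} (γ₁ γ₂ : Fin (k + 1) → Fin n) : ℕ :=
  ((Finset.range k).filter fun i => isNewWrt γ₁ γ₂ i).card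

/-- The number of edges of `γ₂` that are returning with respect to `γ₁`. -/
def kRetWrt {n k : ℕ} (γ₁ γ₂ : Fin (k + 1) → Fin n) : ℕ :=
  ((Finset.range k).filter fun i => ¬ isNewWrt γ₁ γ₂ i ∧ ¬ isOldWrt γ₁ γ₂ i).card

/-! ### Multigraphs, tangles -/

/-- The support simple graph of a multigraph given by multiplicities `m`. -/
def msupp {n : ℕ} (m : Sym2 (Fin n) → ℕ) : SimpleGraph (Fin n) where
  Adj x y := x ≠ y ∧ 0 < m s(x, y)
  symm := by
    refine ⟨?_⟩
    intro x y h
    exact ⟨h.1.symm, by rw [Sym2.eq_swap]; exact h.2⟩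
  loopless := by refine ⟨?_⟩; intro x h; exact h.1 rfl

/-- The ball of radius `ℓ` around `v` in the multigraph `m`. -/
def mball {n : ℕ} (m : Sym2 (Fin n) → ℕ) (ℓ : ℕ) (v : Fin n) : Set (Fin n) :=
  {u | ∃ p : (msupp m).Walk v u, p.length ≤ ℓ}

/-- The number of edges (with multiplicity) of the multigraph `m` with both
endpoints in `S`. -/
def edgeCountIn {n : ℕ} (m : Sym2 (Fin n) → ℕ) (S : Set (Fin n)) : ℕ :=
  ∑ e : Sym2 (Fin n), if ¬ e.IsDiag ∧ ∀ x ∈ e, x ∈ S then m e else 0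

/-- A multigraph is `ℓ`-tangle-free if every neighbourhood of radius `ℓ` contains at
most one cycle, i.e. the number of edges (with multiplicity) inside every radius-`ℓ`
ball is at most the number of its vertices. -/
def MTangleFree {n : ℕ} (ℓ : ℕ) (m : Sym2 (Fin n) → ℕ) : Prop :=
  ∀ v : Fin n, edgeCountIn m (mball m ℓ v) ≤ (mball m ℓ v).ncard

/-- The multiplicity with which the path `γ` traverses each unordered edge. -/
def pmul {n k : ℕ} (γ : Fin (k + 1) → Fin n) : Sym2 (Fin n) → ℕ := fun e =>
  ((Finset.range k).filter fun i => e = s(pget γ i, pget γ (i + 1))).card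

/-- The number `t(γ)` of `ℓ`-tangles of a path `γ`: the minimal number of edges
(counted with multiplicity) whose deletion from the multigraph of `γ` leaves an
`ℓ`-tangle-free multigraph. -/
def tTangles {n k : ℕ} (ℓ : ℕ) (γ : Fin (k + 1) → Fin n) : ℕ :=
  sInf {t | ∃ c : Sym2 (Fin n) → ℕ, (∀ e, c e ≤ pmul γ e) ∧
      (∑ e : Sym2 (Fin n), c e) = t ∧ MTangleFree ℓ (fun e => pmul γ e - c e)}

/-- The multiplicity function (0/1) of the edges of a graph `G : SGraph n`. -/
def gmult {n : ℕ} (G : SGraph n) : Sym2 (Fin n) → ℕ := fun e =>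
  if ∃ x y : Fin n, adj G x y = true ∧ e = s(x, y) then 1 else 0

/-! ### SAW decompositions -/

/-- The set of (unordered) edges of a path. -/
def pathEdges {n k : ℕ} (γ : Fin (k + 1) → Fin n) : Set (Sym2 (Fin n)) :=
  {e | ∃ i < k, e = s(pget γ i, pget γ (i + 1))}

/-- The degree of a vertex in the graph `(V(γ), E(γ))` of a path. -/
def pathDeg {n k : ℕ} (γ : Fin (k + 1) → Fin n) (w : Fin n) : ℕ :=
  Set.ncard {x : Fin n | s(w, x) ∈ pathEdges γ}

/-- `γ` backtracks at `w`. -/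
def backtrackAt {n k : ℕ} (γ : Fin (k + 1) → Fin n) (w : Fin n) : Prop :=
  ∃ i, 0 < i ∧ i < k ∧ pget γ (i - 1) = pget γ (i + 1) ∧ pget γ i = w

/-- The number of backtracks of `γ`. -/
def numBacktracks {n k : ℕ} (γ : Fin (k + 1) → Fin n) : ℕ :=
  ((Finset.range k).filter fun i => 0 < i ∧ pget γ (i - 1) = pget γ (i + 1)).card

/-- The endpoint set `V_end` of the canonical SAW-decomposition: vertices of degree
at least 3, the two endpoints of `γ`, and the backtrack points of `γ`. -/
def VEnd {n k : ℕ} (γ : Fin (k + 1) → Fin n) : Set (Fin n) :=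
  {w | 3 ≤ pathDeg γ w} ∪ {pget γ 0, pget γ k} ∪ {w | backtrackAt γ w}

/-- The edges of the segment of `γ` between positions `j` and `j'`. -/
def segEdges {n k : ℕ} (γ : Fin (k + 1) → Fin n) (j j' : ℕ) : Set (Sym2 (Fin n)) :=
  {e | ∃ i, j ≤ i ∧ i < j' ∧ e = s(pget γ i, pget γ (i + 1))}

/-- `(j, j')` are two consecutive visit times of `γ` to the set `VE`. -/
def IsSegPair {n k : ℕ} (γ : Fin (k + 1) → Fin n) (VE : Set (Fin n)) (j j' : ℕ) : Prop :=
  j < j' ∧ j' ≤ k ∧ pget γ j ∈ VE ∧ pget γ j' ∈ VE ∧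
    ∀ i, j < i → i < j' → pget γ i ∉ VE

/-- The number of distinct segments in the SAW-decomposition of `γ` with endpoint
set `VE` (segments identified by their edge sets). -/
def numSegs {n k : ℕ} (γ : Fin (k + 1) → Fin n) (VE : Set (Fin n)) : ℕ :=
  Set.ncard {E : Set (Sym2 (Fin n)) | ∃ j j', IsSegPair γ VE j j' ∧ E = segEdges γ j j'}

/-- The edge set `E(Z^short(γ))` of the segments of the canonical SAW-decomposition
of `γ` of length at most `4ℓ`. -/
def EZshort {n k : ℕ} (ℓ : ℕ) (γ : Fin (k + 1) → Fin n) : Set (Sym2 (Fin n)) :=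
  {e | ∃ j j', IsSegPair γ (VEnd γ) j j' ∧ j' - j ≤ 4 * ℓ ∧ e ∈ segEdges γ j j'}

/-- The family `𝓕(γ)` of sets of short-segment edges. -/
def FFam {n k : ℕ} (ℓ : ℕ) (γ : Fin (k + 1) → Fin n) : Set (Finset (Sym2 (Fin n))) :=
  {F | ↑F ⊆ EZshort ℓ γ ∧ tTangles ℓ γ ≤ ∑ e ∈ F, pmul γ e ∧ F.card ≤ kRet γ - 1}

end

/-! The sum is the `(eu, ev)` entry of the `z`-th power of the transfer matrix
`A = s • η ηᵀ + d • 𝟙 𝟙ᵀ` on `{±1}`, with `η = (1, -1)`. Since `ηᵀ 𝟙 = 0`, the two rank-one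
parts annihilate each other and each squares to twice itself, so
`A ^ z = 2 ^ (z - 1) • (s ^ z • η ηᵀ + d ^ z • 𝟙 𝟙ᵀ)` for `z ≥ 1`. -/

theorem pget_of_le {β : Type*} {k : ℕ} (γ : Fin (k + 1) → β) {i : ℕ} (hi : i ≤ k) :
    pget γ i = γ ⟨i, Nat.lt_succ_of_le hi⟩ := by
  simp [pget, Nat.min_eq_left hi]

theorem pget_zero {β : Type*} {k : ℕ} (γ : Fin (k + 1) → β) : pget γ 0 = γ 0 :=
  pget_of_le γ (Nat.zero_le k)

theorem pget_last {β : Type*} {k : ℕ} (γ : Fin (k + 1) → β) : pget γ k = γ (Fin.last k) :=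
  pget_of_le γ le_rfl

theorem prod_range_pget {β M : Type*} [CommMonoid M] {k : ℕ} (γ : Fin (k + 1) → β)
    (f : β → β → M) :
    ∏ i ∈ Finset.range k, f (pget γ i) (pget γ (i + 1)) =
      ∏ t : Fin k, f (γ t.castSucc) (γ t.succ) := by
  rw [← Fin.prod_univ_eq_prod_range]
  exact Finset.prod_congr rfl fun t _ => by
    rw [pget_of_le γ t.is_lt.le, pget_of_le γ t.is_lt]; rfl

theorem Matrix.pow_apply_eq_sum_paths {ι R : Type*} [Fintype ι] [DecidableEq ι] [CommSemiring R]
    (M : Matrix ι ι R) (k : ℕ) (i j : ι) :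
    (M ^ k) i j = ∑ σ ∈ Finset.univ.filter
        (fun σ : Fin (k + 1) → ι => σ 0 = i ∧ σ (Fin.last k) = j),
      ∏ t : Fin k, M (σ t.castSucc) (σ t.succ) := by
  induction k generalizing i with
  | zero =>
    rw [pow_zero, Finset.sum_filter, ← (Equiv.funUnique (Fin 1) ι).symm.sum_comp]
    simp [Matrix.one_apply, Fin.last, ite_and]
  | succ k ih =>
    rw [pow_succ', Matrix.mul_apply, Finset.sum_filter,
      ← (Fin.consEquiv fun _ : Fin (k + 2) => ι).sum_comp, Fintype.sum_prod_type]
    simp only [Fin.consEquiv_apply, Fin.cons_zero, ← Fin.succ_last, Fin.cons_succ,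
      Fin.prod_univ_succ, Fin.castSucc_zero, ← Fin.succ_castSucc, ih, Finset.mul_sum,
      Finset.sum_filter]
    rw [Finset.sum_comm]
    simp only [ite_and, mul_ite, mul_zero, Finset.sum_ite_eq, Finset.sum_ite_irrel,
      Finset.sum_const_zero, Finset.sum_ite_eq', Finset.mem_univ, if_true]

def transferMatrix (s d : ℝ) : Matrix Bool Bool ℝ :=
  Matrix.of fun a b => sgn a * sgn b * s + d

theorem transferMatrix_pow_succ_apply (s d : ℝ) (z : ℕ) (a b : Bool) :
    (transferMatrix s d ^ (z + 1)) a b =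
      2 ^ z * (sgn a * sgn b * s ^ (z + 1) + d ^ (z + 1)) := by
  induction z generalizing a with
  | zero => simp [transferMatrix]
  | succ z ih =>
    rw [pow_succ', Matrix.mul_apply, Fintype.sum_bool, ih, ih]
    cases a <;> cases b <;>
      simp only [transferMatrix, Matrix.of_apply, sgn, Bool.false_eq_true, ite_true,
        ite_false] <;> ring

theorem sum_over_labellings_general (s d : ℝ) (z : ℕ) (hz : 1 ≤ z) (eu ev : Bool) :
    ∑ σ ∈ Finset.univ.filter
        (fun σ : Fin (z + 1) → Bool => pget σ 0 = eu ∧ pget σ z = ev),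
      ∏ i ∈ Finset.range z, (sgn (pget σ i) * sgn (pget σ (i + 1)) * s + d)
      = 2 ^ (z - 1) * (sgn eu * sgn ev * s ^ z + d ^ z) := by
  calc _ = ∑ σ ∈ Finset.univ.filter
          (fun σ : Fin (z + 1) → Bool => σ 0 = eu ∧ σ (Fin.last z) = ev),
        ∏ t : Fin z, transferMatrix s d (σ t.castSucc) (σ t.succ) := by
        simp only [pget_zero, pget_last, prod_range_pget _ fun a b => sgn a * sgn b * s + d]
        rfl
    _ = (transferMatrix s d ^ z) eu ev := (Matrix.pow_apply_eq_sum_paths _ _ _ _).symm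
    _ = _ := by
      obtain ⟨m, rfl⟩ := Nat.exists_eq_add_of_le' hz
      rw [transferMatrix_pow_succ_apply, Nat.add_sub_cancel]

/-- For reals `s, d`, `z ≥ 1`, distinct vertices `x 0, …, x z` and
fixed endpoint labels `eu, ev ∈ {±1}`, the sum over all `2^{z-1}` labellings
`τ : {x 0, …, x z} → {±1}` with `τ (x 0) = eu`, `τ (x z) = ev` of
`∏_{i=1}^z (τ_{x_{i-1}} τ_{x_i} s + d)` equals `2^{z-1} (eu · ev · s^z + d^z)`.
(Since the vertices are distinct, labellings of `{x 0, …, x z}` correspond exactly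
to functions `Fin (z+1) → Bool`.) -/
theorem sum_over_labellings (V : Type*) (s d : ℝ) (z : ℕ) (hz : 1 ≤ z)
    (x : Fin (z + 1) → V) (hx : Function.Injective x) (eu ev : Bool) :
    ∑ σ ∈ Finset.univ.filter
        (fun σ : Fin (z + 1) → Bool => pget σ 0 = eu ∧ pget σ z = ev),
      ∏ i ∈ Finset.range z, (sgn (pget σ i) * sgn (pget σ (i + 1)) * s + d)
      = 2 ^ (z - 1) * (sgn eu * sgn ev * s ^ z + d ^ z) :=
  sum_over_labellings_general s d z hz eu ev
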